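/- arXiv:2508.15022 — 2 statements merged into one kernel-verified Lean document; each statement's English description precedes it below -/
import Mathlib

section
/- Let Q be a 2-acyclic quiver and let H = π(Q) be the maximal homotopy (H(i,i) = π₁(Q,i) for every vertex i). Then for any finite sequence of mutations μ_{k_ℓ}···μ_{k_1}(Q,H) = (Q',H'), the quiver Q' is 2-acyclic and equals the iterated Fomin–Zelevinsky mutation μ^{FZ}_{k_ℓ}···μ^{FZ}_{k_1}(Q). In particular, mutation with the maximal homotopy recovers Fomin–Zelevinsky mutation. -/
namespace CMu

/-- A (locally small) quiver with vertex type `V`: a type of arrows together with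
source and target maps.  All quivers in a given statement share the vertex type. -/
structure Quiv (V : Type) where
  Arrow : Type
  src : Arrow → V
  tgt : Arrow → V

variable {V : Type}

namespace Quiv

/-- A quiver is loop-free if no arrow has equal source and target. -/
def LoopFree (Q : Quiv V) : Prop := ∀ a : Q.Arrow, Q.src a ≠ Q.tgt a

/-- A quiver is `2`-acyclic if it contains no oriented `2`-cycle, i.e. there is no pair of
arrows `a, b` with `t a = s b` and `t b = s a` (a loop forms a `2`-cycle with itself). -/
def TwoAcyclic (Q : Quiv V) : Prop :=
  ∀ a b : Q.Arrow, Q.tgt a = Q.src b → Q.tgt b = Q.src a → False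

/-- A quiver is locally finite if each vertex is the source (resp. target) of only
finitely many arrows. -/
def LocallyFinite (Q : Quiv V) : Prop :=
  ∀ v : V, {a : Q.Arrow | Q.src a = v}.Finite ∧ {a : Q.Arrow | Q.tgt a = v}.Finite

/-- The number of arrows from `i` to `j`. -/
noncomputable def nArrows (Q : Quiv V) (i j : V) : ℕ :=
  Nat.card {a : Q.Arrow // Q.src a = i ∧ Q.tgt a = j}

end Quiv

/-- A step of a walk in the underlying graph of a quiver: an arrow traversed forwards,
or an arrow traversed backwards (its formal inverse). -/
inductive Step (Q : Quiv V) : V → V → Type where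
  | fwd (a : Q.Arrow) : Step Q (Q.src a) (Q.tgt a)
  | bwd (a : Q.Arrow) : Step Q (Q.tgt a) (Q.src a)

/-- The inverse of a step. -/
def Step.inv {Q : Quiv V} : {x y : V} → Step Q x y → Step Q y x
  | _, _, .fwd a => .bwd a
  | _, _, .bwd a => .fwd a

/-- A step is forward if it traverses an arrow in its own direction. -/
def Step.IsFwd {Q : Quiv V} : {x y : V} → Step Q x y → Prop
  | _, _, .fwd _ => True
  | _, _, .bwd _ => False

/-- A walk in (the underlying graph of) a quiver `Q` from `x` to `y`:
a word in the arrows of `Q` and their formal inverses. -/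
inductive Walk (Q : Quiv V) : V → V → Type where
  | nil (v : V) : Walk Q v v
  | cons {x y z : V} (e : Step Q x y) (w : Walk Q y z) : Walk Q x z

namespace Walk

/-- Composition (concatenation) of walks. -/
def comp {Q : Quiv V} : {x y z : V} → Walk Q x y → Walk Q y z → Walk Q x z
  | _, _, _, .nil _, w => w
  | _, _, _, .cons e u, w => .cons e (comp u w)

/-- The walk consisting of a single step. -/
def single {Q : Quiv V} {x y : V} (e : Step Q x y) : Walk Q x y := .cons e (.nil _)

/-- The inverse (reversal) of a walk. -/
def inv {Q : Quiv V} : {x y : V} → Walk Q x y → Walk Q y x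
  | _, _, .nil v => .nil v
  | _, _, .cons e u => (inv u).comp (single e.inv)

/-- Transport a walk along equalities of its endpoints. -/
def cast {Q : Quiv V} {x y x' y' : V} (hx : x = x') (hy : y = y') (w : Walk Q x y) :
    Walk Q x' y' := by subst hx; subst hy; exact w

/-- A walk is a (directed) path if all of its steps are forward. -/
def AllFwd {Q : Quiv V} : {x y : V} → Walk Q x y → Prop
  | _, _, .nil _ => True
  | _, _, .cons e w => e.IsFwd ∧ AllFwd w

end Walk

/-- A quiver is acyclic if it contains no (nontrivial) oriented cycle. -/
def Quiv.Acyclic (Q : Quiv V) : Prop :=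
  ∀ (v : V) (w : Walk Q v v), w.AllFwd → w = .nil v

/-- A quiver is connected if any two vertices are joined by a walk. -/
def Quiv.Connected (Q : Quiv V) : Prop := ∀ x y : V, Nonempty (Walk Q x y)

/-- Free homotopy of walks: the equivalence relation on walks generated by cancelling
`e ⬝ e⁻¹`.  Two walks are homotopic iff they have the same reduction, so that the morphisms
of the free groupoid `π(Q)` from `x` to `y` are the homotopy classes of walks from `x` to `y`. -/
inductive WalkHtpy (Q : Quiv V) : {x y : V} → Walk Q x y → Walk Q x y → Prop
  | refl {x y : V} (w : Walk Q x y) : WalkHtpy Q w w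
  | symm {x y : V} {w u : Walk Q x y} : WalkHtpy Q w u → WalkHtpy Q u w
  | trans {x y : V} {w u t : Walk Q x y} : WalkHtpy Q w u → WalkHtpy Q u t → WalkHtpy Q w t
  | cancel {x y z : V} (e : Step Q x y) (w : Walk Q x z) :
      WalkHtpy Q (.cons e (.cons e.inv w)) w
  | congr {x y z : V} (e : Step Q x y) {w u : Walk Q y z} :
      WalkHtpy Q w u → WalkHtpy Q (.cons e w) (.cons e u)

/-- A family of sets of cyclic walks, one at each vertex.  Such a family, when it satisfies
`IsHomotopy`, encodes a normal subgroupoid (a *homotopy*) `H` of the free groupoid `π(Q)`: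
`H(v,v)` is the set of homotopy classes of the walks in the family at `v`. -/
def HSet (Q : Quiv V) := ∀ v : V, Set (Walk Q v v)

/-- `H` is a homotopy on `Q` (a normal subgroupoid of the free groupoid `π(Q)`):
each `H v` is closed under free homotopy of walks, contains the identity, is closed under
composition and inverse (so it determines a subgroup of `π₁(Q,v) = π(Q)(v,v)`), and the family
is closed under conjugation by arbitrary walks. -/
structure IsHomotopy (Q : Quiv V) (H : HSet Q) : Prop where
  htpy_mem : ∀ {v : V} {w u : Walk Q v v}, WalkHtpy Q w u → w ∈ H v → u ∈ H v
  nil_mem : ∀ v : V, Walk.nil v ∈ H v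
  comp_mem : ∀ {v : V} {w u : Walk Q v v}, w ∈ H v → u ∈ H v → w.comp u ∈ H v
  inv_mem : ∀ {v : V} {w : Walk Q v v}, w ∈ H v → w.inv ∈ H v
  conj_mem : ∀ {x y : V} (g : Walk Q x y) {w : Walk Q x x},
    w ∈ H x → (g.inv.comp (w.comp g)) ∈ H y

/-- The oriented `2`-cycle determined by arrows `a : i → j` and `b : j → i`, as a cyclic
walk based at `i = s a`. -/
def twoCycle {Q : Quiv V} (a b : Q.Arrow) (h : Q.tgt a = Q.src b) (h' : Q.tgt b = Q.src a) :
    Walk Q (Q.src a) (Q.src a) :=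
  Walk.cons (.fwd a) ((Walk.single (.fwd b)).cast h.symm h')

/-- A homotopy is reduced if it contains no oriented `2`-cycle of `Q`. -/
def IsReducedH (Q : Quiv V) (H : HSet Q) : Prop :=
  ∀ (a b : Q.Arrow) (h : Q.tgt a = Q.src b) (h' : Q.tgt b = Q.src a),
    twoCycle a b h h' ∉ H (Q.src a)

/-- Two walks `w, u : x → y` represent the same morphism of the quotient groupoid
`π(Q)/H` iff `w⁻¹ u ∈ H`. -/
def HEquiv {Q : Quiv V} (H : HSet Q) {x y : V} (w u : Walk Q x y) : Prop :=
  w.inv.comp u ∈ H y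

/-- The trivial homotopy `𝟙`: only the identity morphisms, i.e. only walks homotopic
to the constant walk. -/
def trivH (Q : Quiv V) : HSet Q := fun v => {w | WalkHtpy Q w (.nil v)}

/-- The maximal homotopy `π(Q)`: all cyclic walks. -/
def maxH (Q : Quiv V) : HSet Q := fun _ => Set.univ

/-- The normal subgroupoid (homotopy) generated by a family `S` of cyclic walks. -/
def genH (Q : Quiv V) (S : HSet Q) : HSet Q := fun v =>
  {w | ∀ K : HSet Q, IsHomotopy Q K → (∀ x, S x ⊆ K x) → w ∈ K v}

/-- The squares of all cyclic walks; `genH Q (sqGens Q)` is the normal subgroupoid `π(Q)²`. -/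
def sqGens (Q : Quiv V) : HSet Q := fun v => {w | ∃ u : Walk Q v v, w = u.comp u}

/-- A morphism from the free groupoid on `Q` to the free groupoid on `R` (both over the same
vertex type, fixing all vertices), given by a choice of a walk in `R` for every arrow of `Q`. -/
structure QMap (Q R : Quiv V) where
  toWalk : (a : Q.Arrow) → Walk R (Q.src a) (Q.tgt a)

namespace QMap

/-- The image of a step. -/
def mapStep {Q R : Quiv V} (F : QMap Q R) : {x y : V} → Step Q x y → Walk R x y
  | _, _, .fwd a => F.toWalk a
  | _, _, .bwd a => (F.toWalk a).inv

/-- The induced map on walks. -/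
def mapWalk {Q R : Quiv V} (F : QMap Q R) : {x y : V} → Walk Q x y → Walk R x y
  | _, _, .nil v => .nil v
  | _, _, .cons e w => (F.mapStep e).comp (F.mapWalk w)

/-- Composition of `QMap`s. -/
def comp {Q R S : Quiv V} (F : QMap Q R) (G : QMap R S) : QMap Q S :=
  ⟨fun a => G.mapWalk (F.toWalk a)⟩

end QMap

/-- The kernel, relative to a homotopy `H` on `R`, of the functor `π(Q) → π(R)/H`
induced by a `QMap`: all cyclic walks whose image lies in `H`. -/
def kerH {Q R : Quiv V} (F : QMap Q R) (H : HSet R) : HSet Q :=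
  fun v => {w | F.mapWalk w ∈ H v}

/-- A (vertex-fixing) isomorphism of quivers over the same vertex type. -/
structure QIso (Q R : Quiv V) where
  arr : Q.Arrow ≃ R.Arrow
  src_eq : ∀ a, R.src (arr a) = Q.src a
  tgt_eq : ∀ a, R.tgt (arr a) = Q.tgt a

/-- The `QMap` underlying a quiver isomorphism. -/
def QIso.toQMap {Q R : Quiv V} (f : QIso Q R) : QMap Q R :=
  ⟨fun a => (Walk.single (.fwd (f.arr a))).cast (f.src_eq a) (f.tgt_eq a)⟩

/-- The pre-mutation `μ̃_k(Q)` of a loop-free quiver `Q` at the vertex `k`: arrows of `Q` not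
incident to `k` are kept, arrows incident to `k` are replaced by reversed arrows `γ*`, and
for every pair of arrows `α, β` with `s α = t β = k` and `s β ≠ t α` a new composite arrow
`[αβ] : s β → t α` is added. -/
def preMut (Q : Quiv V) (k : V) : Quiv V where
  Arrow := {a : Q.Arrow // Q.src a ≠ k ∧ Q.tgt a ≠ k} ⊕
    ({a : Q.Arrow // Q.src a = k ∨ Q.tgt a = k} ⊕
     {p : Q.Arrow × Q.Arrow // Q.src p.1 = k ∧ Q.tgt p.2 = k ∧ Q.src p.2 ≠ Q.tgt p.1})
  src x := match x with
    | .inl a => Q.src a.1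
    | .inr (.inl a) => Q.tgt a.1
    | .inr (.inr p) => Q.src p.1.2
  tgt x := match x with
    | .inl a => Q.tgt a.1
    | .inr (.inl a) => Q.src a.1
    | .inr (.inr p) => Q.tgt p.1.1

/-- The canonical functor `φ : π(μ̃_k Q) → π(Q)` (to be composed with `π(Q) → π(Q)/H`):
it fixes all vertices, sends a kept arrow `γ` to `γ`, a reversed arrow `γ*` to `γ⁻¹`, and a
composite arrow `[αβ]` to the walk `αβ`. -/
def phiQMap (Q : Quiv V) (k : V) : QMap (preMut Q k) Q where
  toWalk x := match x with
    | .inl a => Walk.single (.fwd a.1)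
    | .inr (.inl a) => Walk.single (.bwd a.1)
    | .inr (.inr p) => Walk.cons (.fwd p.1.2)
        ((Walk.single (.fwd p.1.1)).cast (p.2.1.trans p.2.2.1.symm) rfl)

/-- The homotopy `H' = ker (φ : π(μ̃_k Q) → π(Q)/H)` of the pre-mutation `μ̃_k(Q,H) = (Q',H')`. -/
def preH (Q : Quiv V) (H : HSet Q) (k : V) : HSet (preMut Q k) := kerH (phiQMap Q k) H

/-- The subquiver of `R` obtained by deleting the arrows in `S`. -/
def restrictQ (R : Quiv V) (S : Set R.Arrow) : Quiv V where
  Arrow := {a : R.Arrow // a ∉ S}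
  src a := R.src a.1
  tgt a := R.tgt a.1

/-- The inclusion `QMap` of a subquiver. -/
def inclQMap (R : Quiv V) (S : Set R.Arrow) : QMap (restrictQ R S) R :=
  ⟨fun a => Walk.single (.fwd a.1)⟩

/-- A deletion of `2`-cycles lying in a homotopy `H` on a quiver `R`, away from the
vertex `k`: a collection of pairwise disjoint pairs of opposite arrows `(γ, δ)` between two
distinct vertices `i ≠ j`, both different from `k`, such that each composite `2`-cycle `γδ`
lies in `H`. -/
structure TwoCycleDeletion (R : Quiv V) (H : HSet R) (k : V) where
  pairs : Set (R.Arrow × R.Arrow)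
  endpoints : ∀ q ∈ pairs, R.tgt q.1 = R.src q.2 ∧ R.tgt q.2 = R.src q.1
  src_ne_k : ∀ q ∈ pairs, R.src q.1 ≠ k
  tgt_ne_k : ∀ q ∈ pairs, R.tgt q.1 ≠ k
  src_ne_tgt : ∀ q ∈ pairs, R.src q.1 ≠ R.tgt q.1
  mem_H : ∀ q ∈ pairs, ∀ (h : R.tgt q.1 = R.src q.2) (h' : R.tgt q.2 = R.src q.1),
    twoCycle q.1 q.2 h h' ∈ H (R.src q.1)
  disjoint : ∀ q ∈ pairs, ∀ q' ∈ pairs, q ≠ q' →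
    q.1 ≠ q'.1 ∧ q.1 ≠ q'.2 ∧ q.2 ≠ q'.1 ∧ q.2 ≠ q'.2

namespace TwoCycleDeletion

variable {R : Quiv V} {H : HSet R} {k : V}

/-- The set of deleted arrows. -/
def deleted (D : TwoCycleDeletion R H k) : Set R.Arrow :=
  {a | ∃ q ∈ D.pairs, a = q.1 ∨ a = q.2}

/-- A deletion is maximal if no `2`-cycle lying in `H` (between two distinct vertices, both
different from `k`) survives it.  This is the result of the iterative deletion procedure. -/
def Maximal (D : TwoCycleDeletion R H k) : Prop :=
  ∀ γ δ : R.Arrow, γ ∉ D.deleted → δ ∉ D.deleted →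
    R.src γ ≠ k → R.tgt γ ≠ k → R.src γ ≠ R.tgt γ →
    ∀ (h : R.tgt γ = R.src δ) (h' : R.tgt δ = R.src γ),
      twoCycle γ δ h h' ∉ H (R.src γ)

end TwoCycleDeletion

/-- The quiver `Q†` of the mutation `μ_k(Q,H) = (Q†,H†)` determined by a choice `D` of
deleted `2`-cycles. -/
def mutQuiv (Q : Quiv V) (H : HSet Q) (k : V)
    (D : TwoCycleDeletion (preMut Q k) (preH Q H k) k) : Quiv V :=
  restrictQ (preMut Q k) D.deleted

/-- The homotopy `H† = ker (ψ : π(Q†) → π(Q')/H')` of the mutation `μ_k(Q,H) = (Q†,H†)`,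
where `ψ` is induced by the inclusion `Q† ⊆ Q'`. -/
def mutH (Q : Quiv V) (H : HSet Q) (k : V)
    (D : TwoCycleDeletion (preMut Q k) (preH Q H k) k) : HSet (mutQuiv Q H k D) :=
  kerH (inclQMap (preMut Q k) D.deleted) (preH Q H k)

/-- `(R, K)` is (isomorphic, by a vertex-fixing isomorphism matching the homotopies, to)
the mutation `μ_k(Q, H)` of the quiver with homotopy `(Q, H)` in direction `k`. -/
def IsMutationStep (Q : Quiv V) (H : HSet Q) (k : V) (R : Quiv V) (K : HSet R) : Prop :=
  ∃ D : TwoCycleDeletion (preMut Q k) (preH Q H k) k, D.Maximal ∧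
    ∃ f : QIso (mutQuiv Q H k D) R,
      ∀ (v : V) (w : Walk (mutQuiv Q H k D) v v),
        w ∈ mutH Q H k D v ↔ f.toQMap.mapWalk w ∈ K v

/-- A `QMap` `F : π(Q) → π(R)` induces an isomorphism of quotient groupoids
`π(Q)/H_Q ≅ π(R)/H_R` (it is the identity on objects, well defined, full and faithful
on all morphism sets). -/
structure InducesQuotIso {Q R : Quiv V} (F : QMap Q R) (HQ : HSet Q) (HR : HSet R) : Prop where
  maps : ∀ {x y : V} (w u : Walk Q x y), HEquiv HQ w u → HEquiv HR (F.mapWalk w) (F.mapWalk u)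
  full : ∀ {x y : V} (w : Walk R x y), ∃ u : Walk Q x y, HEquiv HR (F.mapWalk u) w
  faithful : ∀ {x y : V} (w u : Walk Q x y),
    HEquiv HR (F.mapWalk w) (F.mapWalk u) → HEquiv HQ w u

/-- A deletion datum for the Fomin–Zelevinsky mutation: a collection of pairwise disjoint
pairs of opposite arrows (oriented `2`-cycles). -/
structure FZDeletion (R : Quiv V) where
  pairs : Set (R.Arrow × R.Arrow)
  endpoints : ∀ q ∈ pairs, R.tgt q.1 = R.src q.2 ∧ R.tgt q.2 = R.src q.1
  disjoint : ∀ q ∈ pairs, ∀ q' ∈ pairs, q ≠ q' →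
    q.1 ≠ q'.1 ∧ q.1 ≠ q'.2 ∧ q.2 ≠ q'.1 ∧ q.2 ≠ q'.2

/-- The arrows deleted by an `FZDeletion`. -/
def FZDeletion.deleted {R : Quiv V} (D : FZDeletion R) : Set R.Arrow :=
  {a | ∃ q ∈ D.pairs, a = q.1 ∨ a = q.2}

/-- `R` is (a representative of) the Fomin–Zelevinsky mutation `μ^FZ_k(Q)` of the `2`-acyclic
quiver `Q`: it is obtained from the pre-mutation of `Q` at `k` by deleting a maximal collection
of oriented `2`-cycles (so that the result is `2`-acyclic), up to vertex-fixing isomorphism. -/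
def IsFZMut (Q : Quiv V) (k : V) (R : Quiv V) : Prop :=
  ∃ D : FZDeletion (preMut Q k),
    (restrictQ (preMut Q k) D.deleted).TwoAcyclic ∧
    Nonempty (QIso (restrictQ (preMut Q k) D.deleted) R)

/-- Two homotopies `H, H'` on `Q` are equivalent if, for every mutation sequence, the
underlying quivers of the corresponding mutated quivers with homotopies are isomorphic by
vertex-fixing isomorphisms. -/
def HomotopyEquivalent (Q : Quiv V) (H H' : HSet Q) : Prop :=
  ∀ (ℓ : ℕ) (ks : ℕ → V)
    (Qs : ℕ → Quiv V) (Hs : ∀ i, HSet (Qs i))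
    (Qs' : ℕ → Quiv V) (Hs' : ∀ i, HSet (Qs' i)),
    Qs 0 = Q → HEq (Hs 0) H → Qs' 0 = Q → HEq (Hs' 0) H' →
    (∀ i < ℓ, IsMutationStep (Qs i) (Hs i) (ks i) (Qs (i + 1)) (Hs (i + 1))) →
    (∀ i < ℓ, IsMutationStep (Qs' i) (Hs' i) (ks i) (Qs' (i + 1)) (Hs' (i + 1))) →
    Nonempty (QIso (Qs ℓ) (Qs' ℓ))

/-- The relation on vertices generated by the arrows (connectivity). -/
def adjRel (Q : Quiv V) : V → V → Prop := fun x y =>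
  ∃ a : Q.Arrow, (Q.src a = x ∧ Q.tgt a = y) ∨ (Q.src a = y ∧ Q.tgt a = x)

/-- The number of connected components of the underlying graph. -/
noncomputable def componentCount (Q : Quiv V) : ℕ := Nat.card (Quot (adjRel Q))

/-- The rank of the fundamental group of (the underlying graph of) a finite quiver:
`|Q₁| - |Q₀| + (number of connected components)`. -/
noncomputable def fundGroupRank (Q : Quiv V) : ℤ :=
  (Nat.card Q.Arrow : ℤ) - (Nat.card V : ℤ) + (componentCount Q : ℤ)

end CMu


/-!
With the maximal homotopy every cyclic walk lies in `H`, hence also in the kernel homotopies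
`H'` and `H†`, and every surviving `2`-cycle away from `k` is deleted. A `2`-cycle through `k`
in the pre-mutation would come from a `2`-cycle or a loop of `Q`, which do not exist. So each
mutated quiver is `2`-acyclic, the deletion is a Fomin–Zelevinsky deletion, and the new homotopy
is again maximal, which lets the argument be iterated.
-/

namespace CMu

variable {V : Type}

namespace Walk

variable {Q : Quiv V}

@[simp]
theorem cast_cast {x y x' y' x'' y'' : V} (hx : x = x') (hy : y = y') (hx' : x' = x'')
    (hy' : y' = y'') (w : Walk Q x y) :
    (w.cast hx hy).cast hx' hy' = w.cast (hx.trans hx') (hy.trans hy') := by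
  subst hx hy hx' hy'; rfl

theorem inv_cast {x y x' y' : V} (hx : x = x') (hy : y = y') (w : Walk Q x y) :
    (w.cast hx hy).inv = w.inv.cast hy hx := by
  subst hx hy; rfl

@[simp]
theorem comp_nil {x y : V} (w : Walk Q x y) : w.comp (.nil y) = w := by
  induction w with
  | nil => rfl
  | cons e w ih => exact congrArg (cons e) ih

theorem comp_assoc {x y z t : V} (w : Walk Q x y) (u : Walk Q y z) (s : Walk Q z t) :
    (w.comp u).comp s = w.comp (u.comp s) := by
  induction w with
  | nil => rfl
  | cons e w ih => exact congrArg (cons e) (ih u)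

end Walk

namespace QMap

variable {Q R : Quiv V}

theorem mapWalk_cast (F : QMap Q R) {x y x' y' : V} (hx : x = x') (hy : y = y')
    (w : Walk Q x y) : F.mapWalk (w.cast hx hy) = (F.mapWalk w).cast hx hy := by
  subst hx hy; rfl

theorem mapWalk_single_fwd (F : QMap Q R) (a : Q.Arrow) :
    F.mapWalk (Walk.single (.fwd a)) = F.toWalk a :=
  Walk.comp_nil _

theorem mapWalk_single_bwd (F : QMap Q R) (a : Q.Arrow) :
    F.mapWalk (Walk.single (.bwd a)) = (F.toWalk a).inv :=
  Walk.comp_nil _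

theorem mapWalk_comp (F : QMap Q R) {x y z : V} (w : Walk Q x y) (u : Walk Q y z) :
    F.mapWalk (w.comp u) = (F.mapWalk w).comp (F.mapWalk u) := by
  induction w with
  | nil => rfl
  | cons e w ih => exact (congrArg _ (ih u)).trans (Walk.comp_assoc _ _ _).symm

end QMap

namespace QIso

variable {Q R : Quiv V}

theorem exists_mapWalk_eq_single (f : QIso Q R) {x y : V} (e : Step R x y) :
    ∃ w : Walk Q x y, f.toQMap.mapWalk w = Walk.single e := by
  cases e with
  | fwd b =>
    obtain ⟨a, rfl⟩ := f.arr.surjective b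
    refine ⟨(Walk.single (.fwd a)).cast (f.src_eq a).symm (f.tgt_eq a).symm, ?_⟩
    rw [QMap.mapWalk_cast, QMap.mapWalk_single_fwd]
    exact Walk.cast_cast _ _ _ _ _
  | bwd b =>
    obtain ⟨a, rfl⟩ := f.arr.surjective b
    refine ⟨(Walk.single (.bwd a)).cast (f.tgt_eq a).symm (f.src_eq a).symm, ?_⟩
    rw [QMap.mapWalk_cast, QMap.mapWalk_single_bwd]
    exact (congrArg (Walk.cast _ _) (Walk.inv_cast _ _ _)).trans (Walk.cast_cast _ _ _ _ _)

theorem mapWalk_surjective (f : QIso Q R) {x y : V} :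
    Function.Surjective (f.toQMap.mapWalk (x := x) (y := y)) := by
  intro u
  induction u with
  | nil v => exact ⟨.nil v, rfl⟩
  | cons e u ih =>
    obtain ⟨we, hwe⟩ := f.exists_mapWalk_eq_single e
    obtain ⟨wu, hwu⟩ := ih
    exact ⟨we.comp wu, by rw [QMap.mapWalk_comp, hwe, hwu]; rfl⟩

theorem twoAcyclic (f : QIso Q R) (h : Q.TwoAcyclic) : R.TwoAcyclic := by
  intro a b hab hba
  apply h (f.arr.symm a) (f.arr.symm b)
  · rw [← f.tgt_eq, ← f.src_eq]; simpa using hab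
  · rw [← f.tgt_eq, ← f.src_eq]; simpa using hba

end QIso

theorem Quiv.TwoAcyclic.loopFree {Q : Quiv V} (h : Q.TwoAcyclic) : Q.LoopFree :=
  fun a ha => h a a ha.symm ha.symm

theorem Quiv.LoopFree.preMut {Q : Quiv V} (h : Q.LoopFree) (k : V) : (preMut Q k).LoopFree := by
  rintro (⟨a, -⟩ | ⟨a, -⟩ | ⟨_, -, -, hp⟩)
  · exact h a
  · exact fun ha => h a ha.symm
  · exact hp

/-- An oriented `2`-cycle of the pre-mutation of a `2`-acyclic quiver never passes through `k`:
it would have to consist of two reversed arrows (a `2`-cycle of `Q`), or of a reversed arrow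
and a composite arrow `[αβ]` (which has an endpoint at `k` only if `α` or `β` is a loop). -/
theorem Quiv.TwoAcyclic.preMut_src_ne {Q : Quiv V} (h : Q.TwoAcyclic) {k : V}
    (a b : (preMut Q k).Arrow) (hab : (preMut Q k).tgt a = (preMut Q k).src b)
    (hba : (preMut Q k).tgt b = (preMut Q k).src a) : (preMut Q k).src a ≠ k := by
  intro hk
  obtain (⟨α, hα⟩ | ⟨α, _⟩ | ⟨⟨_, α₂⟩, _, hα₂, _⟩) := a
  · exact hα.1 hk
  · obtain (⟨β, hβ⟩ | ⟨β, _⟩ | ⟨⟨β₁, _⟩, hβ₁, _, _⟩) := b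
    · exact hβ.2 (hba.trans hk)
    · exact h α β hba.symm hab.symm
    · exact h.loopFree β₁ (hβ₁.trans (hba.trans hk).symm)
  · exact h.loopFree α₂ (hk.trans hα₂.symm)

theorem mutQuiv_twoAcyclic {Q : Quiv V} {H : HSet Q} {k : V} (h : Q.TwoAcyclic)
    (hH : ∀ (v : V) (w : Walk Q v v), w ∈ H v)
    (D : TwoCycleDeletion (preMut Q k) (preH Q H k) k) (hD : D.Maximal) :
    (mutQuiv Q H k D).TwoAcyclic := by
  intro a b hab hba
  have hsrc : (preMut Q k).src a.1 ≠ k := h.preMut_src_ne a.1 b.1 hab hba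
  have htgt : (preMut Q k).tgt a.1 ≠ k := hab ▸ h.preMut_src_ne b.1 a.1 hba hab
  exact hD a.1 b.1 a.2 b.2 hsrc htgt (h.loopFree.preMut k a.1) hab hba (hH _ _)

namespace IsMutationStep

variable {Q R : Quiv V} {H : HSet Q} {K : HSet R} {k : V}

theorem twoAcyclic (hs : IsMutationStep Q H k R K) (h : Q.TwoAcyclic)
    (hH : ∀ (v : V) (w : Walk Q v v), w ∈ H v) : R.TwoAcyclic := by
  obtain ⟨D, hD, f, -⟩ := hs
  exact f.twoAcyclic (mutQuiv_twoAcyclic h hH D hD)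

theorem forall_mem (hs : IsMutationStep Q H k R K) (hH : ∀ (v : V) (w : Walk Q v v), w ∈ H v) :
    ∀ (v : V) (u : Walk R v v), u ∈ K v := by
  obtain ⟨D, -, f, hf⟩ := hs
  intro v u
  obtain ⟨w, rfl⟩ := f.mapWalk_surjective u
  exact (hf v w).1 (hH _ _)

theorem isFZMut (hs : IsMutationStep Q H k R K) (h : Q.TwoAcyclic)
    (hH : ∀ (v : V) (w : Walk Q v v), w ∈ H v) : IsFZMut Q k R := by
  obtain ⟨D, hD, f, -⟩ := hs
  exact ⟨⟨D.pairs, D.endpoints, D.disjoint⟩, mutQuiv_twoAcyclic h hH D hD, ⟨f⟩⟩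

end IsMutationStep

theorem maximal_homotopy_gives_FZ_mutation_general {V : Type} (ℓ : ℕ) (ks : ℕ → V)
    (Qs : ℕ → Quiv V) (Hs : ∀ i, HSet (Qs i))
    (hQ : (Qs 0).TwoAcyclic)
    (hH : ∀ v, Hs 0 v = maxH (Qs 0) v)
    (hstep : ∀ i < ℓ, IsMutationStep (Qs i) (Hs i) (ks i) (Qs (i + 1)) (Hs (i + 1))) :
    (∀ i ≤ ℓ, (Qs i).TwoAcyclic) ∧
    (∀ i < ℓ, IsFZMut (Qs i) (ks i) (Qs (i + 1))) := by
  have invariant : ∀ i ≤ ℓ, (Qs i).TwoAcyclic ∧ ∀ (v : V) (w : Walk (Qs i) v v), w ∈ Hs i v := by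
    intro i hi
    induction i with
    | zero => exact ⟨hQ, fun v w => (hH v).symm ▸ Set.mem_univ w⟩
    | succ i ih =>
      obtain ⟨h2, hmax⟩ := ih (Nat.le_of_succ_le hi)
      exact ⟨(hstep i hi).twoAcyclic h2 hmax, (hstep i hi).forall_mem hmax⟩
  refine ⟨fun i hi => (invariant i hi).1, fun i hi => ?_⟩
  obtain ⟨h2, hmax⟩ := invariant i hi.le
  exact (hstep i hi).isFZMut h2 hmax

/-- **Mutation with the maximal homotopy recovers Fomin–Zelevinsky mutation** (Proposition
`prop: maximal H induces FZ mutation`).  Let `Q` be a `2`-acyclic (locally finite, loop-free)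
quiver equipped with the maximal homotopy `H = π(Q)` (i.e. `H(i,i) = π₁(Q,i)` for every
vertex `i`).  Then along any finite sequence of mutations
`μ_{k_ℓ} ⋯ μ_{k_1}(Q, H) = (Q_ℓ, H_ℓ)`, every intermediate quiver is `2`-acyclic and each
step is a Fomin–Zelevinsky mutation; in particular `Q_ℓ = μ^FZ_{k_ℓ} ⋯ μ^FZ_{k_1}(Q)`. -/
theorem maximal_homotopy_gives_FZ_mutation {V : Type} (ℓ : ℕ) (ks : ℕ → V)
    (Qs : ℕ → Quiv V) (Hs : ∀ i, HSet (Qs i))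
    (hQ : (Qs 0).TwoAcyclic) (hlf : (Qs 0).LocallyFinite)
    (hH : ∀ v, Hs 0 v = maxH (Qs 0) v)
    (hstep : ∀ i < ℓ, IsMutationStep (Qs i) (Hs i) (ks i) (Qs (i + 1)) (Hs (i + 1))) :
    (∀ i ≤ ℓ, (Qs i).TwoAcyclic) ∧
    (∀ i < ℓ, IsFZMut (Qs i) (ks i) (Qs (i + 1))) :=
  maximal_homotopy_gives_FZ_mutation_general ℓ ks Qs Hs hQ hH hstep

end CMu
end

section
/- Let p: Q̃ → Q be a weakly admissible quiver covering, k a vertex of Q, and Γ = Deck(p). With a Γ-equivariant choice of maximal collections of 2-cycles to delete between each pair of vertices not in p⁻¹(k), the group Γ acts freely by quiver automorphisms on the orbit mutation μ_[k](Q̃), and the quotient map μ_[k](Q̃) → μ_[k](Q̃)/Γ is a quiver covering whose deck transformation group is Γ. -/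
namespace CMu

variable {V W : Type}

/-- A morphism of quivers (over possibly different vertex types). -/
structure QuivHom (Q : Quiv V) (R : Quiv W) where
  onV : V → W
  onA : Q.Arrow → R.Arrow
  src_eq : ∀ a, R.src (onA a) = onV (Q.src a)
  tgt_eq : ∀ a, R.tgt (onA a) = onV (Q.tgt a)

namespace QuivHom

/-- The image of a step under a morphism of quivers. -/
def mapStep {Q : Quiv V} {R : Quiv W} (p : QuivHom Q R) :
    {x y : V} → Step Q x y → Walk R (p.onV x) (p.onV y)
  | _, _, .fwd a => (Walk.single (.fwd (p.onA a))).cast (p.src_eq a) (p.tgt_eq a)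
  | _, _, .bwd a => (Walk.single (.bwd (p.onA a))).cast (p.tgt_eq a) (p.src_eq a)

/-- The image of a walk under a morphism of quivers. -/
def mapWalk {Q : Quiv V} {R : Quiv W} (p : QuivHom Q R) :
    {x y : V} → Walk Q x y → Walk R (p.onV x) (p.onV y)
  | _, _, .nil v => .nil (p.onV v)
  | _, _, .cons e w => (p.mapStep e).comp (p.mapWalk w)

end QuivHom

/-- A covering of quivers: a morphism of quivers which is surjective on vertices and
restricts to bijections between the sets of arrows ending (resp. starting) at any vertex `v`
of the total quiver and the arrows ending (resp. starting) at its image. -/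
def IsCovering {Q : Quiv V} {R : Quiv W} (p : QuivHom Q R) : Prop :=
  Function.Surjective p.onV ∧
  (∀ a b : Q.Arrow, Q.tgt a = Q.tgt b → p.onA a = p.onA b → a = b) ∧
  (∀ (v : V) (b : R.Arrow), R.tgt b = p.onV v → ∃ a : Q.Arrow, Q.tgt a = v ∧ p.onA a = b) ∧
  (∀ a b : Q.Arrow, Q.src a = Q.src b → p.onA a = p.onA b → a = b) ∧
  (∀ (v : V) (b : R.Arrow), R.src b = p.onV v → ∃ a : Q.Arrow, Q.src a = v ∧ p.onA a = b)

/-- An automorphism of a quiver. -/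
structure QuivAut (Q : Quiv V) where
  vMap : V ≃ V
  aMap : Q.Arrow ≃ Q.Arrow
  src_eq : ∀ a, Q.src (aMap a) = vMap (Q.src a)
  tgt_eq : ∀ a, Q.tgt (aMap a) = vMap (Q.tgt a)

/-- A deck transformation of `p`: an automorphism of the total quiver commuting with `p`. -/
def IsDeck {Q : Quiv V} {R : Quiv W} (p : QuivHom Q R) (τ : QuivAut Q) : Prop :=
  (∀ v, p.onV (τ.vMap v) = p.onV v) ∧ (∀ a, p.onA (τ.aMap a) = p.onA a)

/-- A covering is regular (normal) if its deck transformation group acts transitively on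
every fiber. -/
def RegularCov {Q : Quiv V} {R : Quiv W} (p : QuivHom Q R) : Prop :=
  ∀ x y : V, p.onV x = p.onV y → ∃ τ : QuivAut Q, IsDeck p τ ∧ τ.vMap x = y

/-- A (normal) covering `p : Q̃ → Q` is weakly admissible if `Q̃` is `2`-acyclic and `Q` is
loop-free. -/
def WeaklyAdmissible {Qt : Quiv V} {Qb : Quiv W} (p : QuivHom Qt Qb) : Prop :=
  IsCovering p ∧ RegularCov p ∧ Qt.TwoAcyclic ∧ Qb.LoopFree

/-- The orbit pre-mutation of a quiver `Q` at a set `S` of vertices (for `S = p⁻¹(k)` this is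
`μ̃_[k](Q̃)`): all arrows incident to `S` are reversed, and for each pair of arrows `(α, β)`
with `s α = t β ∈ S` a new arrow `[αβ] : s β → t α` is added. -/
def preMutS (Q : Quiv V) (S : Set V) : Quiv V where
  Arrow := {a : Q.Arrow // Q.src a ∉ S ∧ Q.tgt a ∉ S} ⊕
    ({a : Q.Arrow // Q.src a ∈ S ∨ Q.tgt a ∈ S} ⊕
     {p : Q.Arrow × Q.Arrow // Q.src p.1 ∈ S ∧ Q.tgt p.2 = Q.src p.1})
  src x := match x with
    | .inl a => Q.src a.1
    | .inr (.inl a) => Q.tgt a.1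
    | .inr (.inr p) => Q.src p.1.2
  tgt x := match x with
    | .inl a => Q.tgt a.1
    | .inr (.inl a) => Q.src a.1
    | .inr (.inr p) => Q.tgt p.1.1

/-- Forget the defining constraints of an arrow of the orbit pre-mutation: a kept arrow,
a reversed arrow, or a composite pair. -/
def rawA {Q : Quiv V} {S : Set V} :
    (preMutS Q S).Arrow → Q.Arrow ⊕ (Q.Arrow ⊕ Q.Arrow × Q.Arrow)
  | .inl a => .inl a.1
  | .inr (.inl a) => .inr (.inl a.1)
  | .inr (.inr p) => .inr (.inr p.1)

/-- Forget the defining constraints of an arrow of the pre-mutation `μ̃_k(Q)`. -/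
def rawPM {Q : Quiv V} {k : V} :
    (preMut Q k).Arrow → Q.Arrow ⊕ (Q.Arrow ⊕ Q.Arrow × Q.Arrow)
  | .inl a => .inl a.1
  | .inr (.inl a) => .inr (.inl a.1)
  | .inr (.inr p) => .inr (.inr p.1)

/-- The raw action of a map on arrows on the three kinds of arrows. -/
def rawMap {A B : Type} (f : A → B) :
    A ⊕ (A ⊕ A × A) → B ⊕ (B ⊕ B × B) :=
  Sum.map f (Sum.map f (Prod.map f f))

/-- An automorphism of `Q` preserving `S` extends canonically to an automorphism of the
orbit pre-mutation `preMutS Q S`. -/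
def preMutSAut {Q : Quiv V} (S : Set V) (τ : QuivAut Q)
    (hS : ∀ v, v ∈ S ↔ τ.vMap v ∈ S) : QuivAut (preMutS Q S) where
  vMap := τ.vMap
  aMap := Equiv.sumCongr
    (τ.aMap.subtypeEquiv (fun a => by
      rw [τ.src_eq, τ.tgt_eq, ← hS, ← hS]))
    (Equiv.sumCongr
      (τ.aMap.subtypeEquiv (fun a => by
        rw [τ.src_eq, τ.tgt_eq, ← hS, ← hS]))
      ((τ.aMap.prodCongr τ.aMap).subtypeEquiv (fun p => by
        simp only [Equiv.prodCongr_apply, Prod.map_fst, Prod.map_snd]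
        rw [τ.src_eq, τ.tgt_eq, ← hS]
        exact and_congr Iff.rfl ⟨fun h => by rw [h], fun h => τ.vMap.injective h⟩)))
  src_eq x := by
    rcases x with a | a | p <;>
      first
      | exact τ.src_eq _
      | exact τ.tgt_eq _
  tgt_eq x := by
    rcases x with a | a | p <;>
      first
      | exact τ.src_eq _
      | exact τ.tgt_eq _

/-- The canonical extension of a deck transformation of `p` to the orbit pre-mutation
`μ̃_[k](Q̃) = preMutS Q̃ (p⁻¹ k)`. -/
def deckAct {Qt : Quiv V} {Qb : Quiv W} (p : QuivHom Qt Qb) (k : W)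
    (τ : QuivAut Qt) (hτ : IsDeck p τ) : QuivAut (preMutS Qt (p.onV ⁻¹' {k})) :=
  preMutSAut _ τ (fun v => by
    simp only [Set.mem_preimage, Set.mem_singleton_iff, hτ.1 v])

/-- The set of arrows deleted by a collection of pairs of opposite arrows. -/
def orbDeleted {R : Quiv V} (pairs : Set (R.Arrow × R.Arrow)) : Set R.Arrow :=
  {a | ∃ q ∈ pairs, a = q.1 ∨ a = q.2}

/-- A valid `Γ`-equivariant maximal choice of `2`-cycles to delete from the orbit
pre-mutation `μ̃_[k](Q̃)` (as in the Lemma on removing `2`-cycles equivariantly):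
each pair consists of opposite arrows between two distinct vertices not in `p⁻¹(k)`,
the pairs are pairwise disjoint, the collection is maximal, and it is stable under the
extended action of every deck transformation. -/
def OrbDelValid {Qt : Quiv V} {Qb : Quiv W} (p : QuivHom Qt Qb) (k : W)
    (pairs : Set ((preMutS Qt (p.onV ⁻¹' {k})).Arrow × (preMutS Qt (p.onV ⁻¹' {k})).Arrow)) :
    Prop :=
  (∀ q ∈ pairs,
      (preMutS Qt (p.onV ⁻¹' {k})).tgt q.1 = (preMutS Qt (p.onV ⁻¹' {k})).src q.2 ∧
      (preMutS Qt (p.onV ⁻¹' {k})).tgt q.2 = (preMutS Qt (p.onV ⁻¹' {k})).src q.1 ∧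
      (preMutS Qt (p.onV ⁻¹' {k})).src q.1 ∉ (p.onV ⁻¹' {k}) ∧
      (preMutS Qt (p.onV ⁻¹' {k})).tgt q.1 ∉ (p.onV ⁻¹' {k}) ∧
      (preMutS Qt (p.onV ⁻¹' {k})).src q.1 ≠ (preMutS Qt (p.onV ⁻¹' {k})).tgt q.1) ∧
  (∀ q ∈ pairs, ∀ q' ∈ pairs, q ≠ q' →
      q.1 ≠ q'.1 ∧ q.1 ≠ q'.2 ∧ q.2 ≠ q'.1 ∧ q.2 ≠ q'.2) ∧
  (∀ γ δ : (preMutS Qt (p.onV ⁻¹' {k})).Arrow,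
      γ ∉ orbDeleted pairs → δ ∉ orbDeleted pairs →
      (preMutS Qt (p.onV ⁻¹' {k})).tgt γ = (preMutS Qt (p.onV ⁻¹' {k})).src δ →
      (preMutS Qt (p.onV ⁻¹' {k})).tgt δ = (preMutS Qt (p.onV ⁻¹' {k})).src γ →
      (preMutS Qt (p.onV ⁻¹' {k})).src γ ∉ (p.onV ⁻¹' {k}) →
      (preMutS Qt (p.onV ⁻¹' {k})).tgt γ ∉ (p.onV ⁻¹' {k}) →
      (preMutS Qt (p.onV ⁻¹' {k})).src γ ≠ (preMutS Qt (p.onV ⁻¹' {k})).tgt γ → False) ∧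
  (∀ (τ : QuivAut Qt) (hτ : IsDeck p τ) (q : _ × _),
      q ∈ pairs ↔ ((deckAct p k τ hτ).aMap q.1, (deckAct p k τ hτ).aMap q.2) ∈ pairs)

/-- The relation on vertices induced by a set of automorphisms. -/
def autRelV {Q : Quiv V} (G : Set (QuivAut Q)) : V → V → Prop :=
  fun x y => ∃ τ ∈ G, τ.vMap x = y

/-- The relation on arrows induced by a set of automorphisms. -/
def autRelA {Q : Quiv V} (G : Set (QuivAut Q)) : Q.Arrow → Q.Arrow → Prop :=
  fun a b => ∃ τ ∈ G, τ.aMap a = b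

/-- The quotient quiver of a quiver by (the action of) a set of automorphisms: vertices and
arrows are the orbit classes. -/
def quotQuiv (Q : Quiv V) (G : Set (QuivAut Q)) : Quiv (Quot (autRelV G)) where
  Arrow := Quot (autRelA G)
  src := Quot.lift (fun a => Quot.mk _ (Q.src a)) (by
    rintro a b ⟨τ, hτ, rfl⟩
    exact Quot.sound ⟨τ, hτ, (τ.src_eq a).symm⟩)
  tgt := Quot.lift (fun a => Quot.mk _ (Q.tgt a)) (by
    rintro a b ⟨τ, hτ, rfl⟩
    exact Quot.sound ⟨τ, hτ, (τ.tgt_eq a).symm⟩)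

/-- The quotient morphism onto the quotient quiver. -/
def quotHom (Q : Quiv V) (G : Set (QuivAut Q)) : QuivHom Q (quotQuiv Q G) where
  onV := Quot.mk _
  onA := Quot.mk _
  src_eq _ := rfl
  tgt_eq _ := rfl

/-- The homotopy `p_*(π(Q̃))` on the base of a covering `p : Q̃ → Q`: at each vertex `x`,
the cyclic walks homotopic to the image of a cyclic walk of `Q̃` based in the fiber of `x`.
For a regular covering this is the normal subgroupoid corresponding to `p` under the Galois
correspondence. -/
def coverH {Qt : Quiv V} {Qb : Quiv W} (p : QuivHom Qt Qb) : HSet Qb :=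
  fun x => {w | ∃ (xt : V) (h : p.onV xt = x) (wt : Walk Qt xt xt),
    WalkHtpy Qb ((p.mapWalk wt).cast h h) w}

/-- `G` is the set of automorphisms of the orbit mutation
`μ_[k](Q̃) = restrictQ (μ̃_[k] Q̃) (orbDeleted pairs)` obtained by restricting the extended
action of the deck transformations of `p`. -/
def GChar {Qt : Quiv V} {Qb : Quiv W} (p : QuivHom Qt Qb) (k : W)
    (pairs : Set ((preMutS Qt (p.onV ⁻¹' {k})).Arrow × (preMutS Qt (p.onV ⁻¹' {k})).Arrow))
    (G : Set (QuivAut (restrictQ (preMutS Qt (p.onV ⁻¹' {k})) (orbDeleted pairs)))) : Prop :=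
  ∀ σ, σ ∈ G ↔ ∃ (τ : QuivAut Qt) (hτ : IsDeck p τ),
    (∀ v, σ.vMap v = τ.vMap v) ∧
    ∀ a, (σ.aMap a).1 = (deckAct p k τ hτ).aMap a.1

/-- `p'` is (isomorphic to) the orbit mutation `μ_[k](p)` of the covering `p` at direction
`[k]`: there are a `Γ`-equivariant maximal deletion of `2`-cycles from the orbit pre-mutation
and isomorphisms of the total and base quivers identifying `p'` with the quotient covering
`μ_[k](Q̃) → μ_[k](Q̃)/Γ`. -/
def IsOrbitMutCov {Qt Qt' : Quiv V} {Qb Qb' : Quiv W}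
    (p : QuivHom Qt Qb) (k : W) (p' : QuivHom Qt' Qb') : Prop :=
  ∃ pairs, OrbDelValid p k pairs ∧
    ∃ G, GChar p k pairs G ∧
      ∃ (ft : QuivHom (restrictQ (preMutS Qt (p.onV ⁻¹' {k})) (orbDeleted pairs)) Qt')
        (fb : QuivHom (quotQuiv (restrictQ (preMutS Qt (p.onV ⁻¹' {k})) (orbDeleted pairs)) G)
          Qb'),
        Function.Bijective ft.onV ∧ Function.Bijective ft.onA ∧
        Function.Bijective fb.onV ∧ Function.Bijective fb.onA ∧
        (∀ v, p'.onV (ft.onV v) = fb.onV (Quot.mk _ v)) ∧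
        (∀ a, p'.onA (ft.onA a) = fb.onA (Quot.mk _ a))

/-- `p` remains weakly admissible after every sequence of at most `m` orbit mutations. -/
def GWAn : ℕ → {Qt : Quiv V} → {Qb : Quiv W} → QuivHom Qt Qb → Prop
  | 0, _, _, p => WeaklyAdmissible p
  | (m + 1), _, _, p => WeaklyAdmissible p ∧
      ∀ (k : W) (Qt' : Quiv V) (Qb' : Quiv W) (p' : QuivHom Qt' Qb'),
        IsOrbitMutCov p k p' → GWAn m p'

/-- A covering is globally weakly admissible if it stays weakly admissible after any finite
sequence of orbit mutations in any directions. -/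
def GloballyWeaklyAdmissible {Qt : Quiv V} {Qb : Quiv W} (p : QuivHom Qt Qb) : Prop :=
  ∀ m : ℕ, GWAn m p

end CMu

namespace CMu

variable {V W : Type}

/-- The orbit pre-mutation `μ̃_[k](Q̃)` of a covering `p : Q̃ → Q` at direction `[k]`. -/
def orbPreMut {Qt : Quiv V} {Qb : Quiv W} (p : QuivHom Qt Qb) (k : W) : Quiv V :=
  preMutS Qt (p.onV ⁻¹' {k})

/-- The set of `Γ`-loops of the orbit pre-mutation: arrows joining two vertices in the same
orbit of the deck transformation group of `p`. -/
def gammaLoops {Qt : Quiv V} {Qb : Quiv W} (p : QuivHom Qt Qb) (k : W) :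
    Set (orbPreMut p k).Arrow :=
  {x | ∃ τ : QuivAut Qt, IsDeck p τ ∧ τ.vMap ((orbPreMut p k).src x) = (orbPreMut p k).tgt x}

end CMu

/-!
The extension of a deck transformation to the orbit pre-mutation preserves the equivariant
collection of deleted `2`-cycles, hence restricts to the orbit mutation `μ_[k](Q̃)`; this is a
homomorphism `Γ → Aut(μ_[k](Q̃))`. A deck transformation of a covering of a connected quiver is
determined by the image of a single vertex, so `Γ` acts freely. The orbit mutation is again
connected: an arrow of `Q̃` either survives, or is reversed, or was deleted together with a
composite `[αβ]`, and then `α*`, `β*` join its endpoints. Finally, the quotient of any quiver by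
a freely acting group of automorphisms is a covering, and when the quiver is connected its deck
transformations are exactly the elements of the group, since they are determined by one vertex.
-/

namespace CMu

variable {V W : Type}

namespace QuivAut

variable {Q : Quiv V}

@[ext]
theorem ext {σ τ : QuivAut Q} (hV : ∀ v, σ.vMap v = τ.vMap v)
    (hA : ∀ a, σ.aMap a = τ.aMap a) : σ = τ := by
  obtain ⟨σV, σA, _, _⟩ := σ
  obtain ⟨τV, τA, _, _⟩ := τ
  obtain rfl : σV = τV := Equiv.ext hV
  obtain rfl : σA = τA := Equiv.ext hA
  rfl

instance : One (QuivAut Q) := ⟨⟨1, 1, fun _ => rfl, fun _ => rfl⟩⟩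

instance : Mul (QuivAut Q) :=
  ⟨fun σ τ => ⟨σ.vMap * τ.vMap, σ.aMap * τ.aMap,
    fun a => by simp only [Equiv.Perm.mul_apply, σ.src_eq, τ.src_eq],
    fun a => by simp only [Equiv.Perm.mul_apply, σ.tgt_eq, τ.tgt_eq]⟩⟩

instance : Inv (QuivAut Q) :=
  ⟨fun σ => ⟨σ.vMap⁻¹, σ.aMap⁻¹,
    fun a => σ.vMap.injective (by rw [← σ.src_eq]; simp),
    fun a => σ.vMap.injective (by rw [← σ.tgt_eq]; simp)⟩⟩

instance : Group (QuivAut Q) :=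
  Group.ofLeftAxioms (fun _ _ _ => rfl) (fun _ => rfl)
    (fun σ => ext (fun v => σ.vMap.symm_apply_apply v) (fun a => σ.aMap.symm_apply_apply a))

def vMapHom : QuivAut Q →* Equiv.Perm V where
  toFun := vMap
  map_one' := rfl
  map_mul' _ _ := rfl

def aMapHom : QuivAut Q →* Equiv.Perm Q.Arrow where
  toFun := aMap
  map_one' := rfl
  map_mul' _ _ := rfl

def restrict {R : Quiv V} (σ : QuivAut R) (S : Set R.Arrow) (hS : ∀ a, σ.aMap a ∈ S ↔ a ∈ S) :
    QuivAut (restrictQ R S) where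
  vMap := σ.vMap
  aMap := σ.aMap.subtypeEquiv fun a => not_congr (hS a).symm
  src_eq a := σ.src_eq a.1
  tgt_eq a := σ.tgt_eq a.1

end QuivAut

theorem orbit_equivalence {G α : Type*} [Group G] (H : Subgroup G)
    (f : G →* Equiv.Perm α) : Equivalence fun x y : α => ∃ g ∈ H, f g x = y where
  refl x := ⟨1, H.one_mem, by simp⟩
  symm := by
    rintro x _ ⟨g, hg, rfl⟩
    exact ⟨g⁻¹, H.inv_mem hg, by simp⟩
  trans := by
    rintro x _ _ ⟨g, hg, rfl⟩ ⟨h, hh, rfl⟩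
    exact ⟨h * g, H.mul_mem hh hg, by simp⟩

section Quotient

variable {Q : Quiv V} (G : Subgroup (QuivAut Q))

theorem quot_mk_autRelV_eq_iff {x y : V} :
    Quot.mk (autRelV (G : Set (QuivAut Q))) x = Quot.mk _ y ↔ ∃ σ ∈ G, σ.vMap x = y :=
  (orbit_equivalence G QuivAut.vMapHom).quot_mk_eq_iff x y

theorem quot_mk_autRelA_eq_iff {a b : Q.Arrow} :
    Quot.mk (autRelA (G : Set (QuivAut Q))) a = Quot.mk _ b ↔ ∃ σ ∈ G, σ.aMap a = b :=
  (orbit_equivalence G QuivAut.aMapHom).quot_mk_eq_iff a b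

def ActsFreely : Prop := ∀ σ ∈ G, ∀ v, σ.vMap v = v → σ = 1

variable {G}

theorem eq_of_quot_mk_eq_of_endpoint_eq (hG : ActsFreely G) (e : Q.Arrow → V)
    (he : ∀ (σ : QuivAut Q) a, e (σ.aMap a) = σ.vMap (e a)) {a b : Q.Arrow} (hab : e a = e b)
    (h : Quot.mk (autRelA (G : Set (QuivAut Q))) a = Quot.mk _ b) : a = b := by
  obtain ⟨σ, hσ, rfl⟩ := (quot_mk_autRelA_eq_iff G).1 h
  obtain rfl : σ = 1 := hG σ hσ (e a) ((he σ a).symm.trans hab.symm)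
  rfl

theorem exists_lift_of_quot_mk_endpoint_eq (e : Q.Arrow → V)
    (he : ∀ (σ : QuivAut Q) a, e (σ.aMap a) = σ.vMap (e a)) {v : V} {b : Q.Arrow}
    (h : Quot.mk (autRelV (G : Set (QuivAut Q))) (e b) = Quot.mk _ v) :
    ∃ a, e a = v ∧ Quot.mk (autRelA (G : Set (QuivAut Q))) a = Quot.mk _ b := by
  obtain ⟨σ, hσ, hv⟩ := (quot_mk_autRelV_eq_iff G).1 h
  exact ⟨σ.aMap b, (he σ b).trans hv, ((quot_mk_autRelA_eq_iff G).2 ⟨σ, hσ, rfl⟩).symm⟩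

theorem isCovering_quotHom (hG : ActsFreely G) : IsCovering (quotHom Q G) := by
  refine ⟨Quot.mk_surjective, fun _ _ => eq_of_quot_mk_eq_of_endpoint_eq hG Q.tgt QuivAut.tgt_eq,
    fun v b hb => ?_, fun _ _ => eq_of_quot_mk_eq_of_endpoint_eq hG Q.src QuivAut.src_eq,
    fun v b hb => ?_⟩
  · induction b using Quot.ind
    exact exists_lift_of_quot_mk_endpoint_eq Q.tgt QuivAut.tgt_eq hb
  · induction b using Quot.ind
    exact exists_lift_of_quot_mk_endpoint_eq Q.src QuivAut.src_eq hb

theorem isDeck_quotHom {σ : QuivAut Q} (hσ : σ ∈ G) : IsDeck (quotHom Q G) σ :=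
  ⟨fun _ => (Quot.sound ⟨σ, hσ, rfl⟩).symm, fun _ => (Quot.sound ⟨σ, hσ, rfl⟩).symm⟩

end Quotient

section Deck

variable {Q : Quiv V} {R : Quiv W} {q : QuivHom Q R}

def deckGroup (q : QuivHom Q R) : Subgroup (QuivAut Q) where
  carrier := {σ | IsDeck q σ}
  one_mem' := ⟨fun _ => rfl, fun _ => rfl⟩
  mul_mem' h₁ h₂ := ⟨fun _ => (h₁.1 _).trans (h₂.1 _), fun _ => (h₁.2 _).trans (h₂.2 _)⟩
  inv_mem' {σ} h := ⟨fun v => (h.1 _).symm.trans (congrArg q.onV (σ.vMap.apply_symm_apply v)),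
    fun a => (h.2 _).symm.trans (congrArg q.onA (σ.aMap.apply_symm_apply a))⟩

namespace IsCovering

variable {σ₁ σ₂ : QuivAut Q}

theorem aMap_eq_of_src (hq : IsCovering q) (h₁ : IsDeck q σ₁) (h₂ : IsDeck q σ₂) {a : Q.Arrow}
    (h : σ₁.vMap (Q.src a) = σ₂.vMap (Q.src a)) : σ₁.aMap a = σ₂.aMap a :=
  hq.2.2.2.1 _ _ (by rw [σ₁.src_eq, σ₂.src_eq, h]) ((h₁.2 a).trans (h₂.2 a).symm)

theorem aMap_eq_of_tgt (hq : IsCovering q) (h₁ : IsDeck q σ₁) (h₂ : IsDeck q σ₂) {a : Q.Arrow}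
    (h : σ₁.vMap (Q.tgt a) = σ₂.vMap (Q.tgt a)) : σ₁.aMap a = σ₂.aMap a :=
  hq.2.1 _ _ (by rw [σ₁.tgt_eq, σ₂.tgt_eq, h]) ((h₁.2 a).trans (h₂.2 a).symm)

theorem eq_of_isDeck (hq : IsCovering q) (hconn : Q.Connected) (h₁ : IsDeck q σ₁)
    (h₂ : IsDeck q σ₂) {v : V} (hv : σ₁.vMap v = σ₂.vMap v) : σ₁ = σ₂ := by
  have propagate {x y : V} (w : Walk Q x y) : σ₁.vMap x = σ₂.vMap x → σ₁.vMap y = σ₂.vMap y := by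
    induction w with
    | nil => exact id
    | cons e _ ih =>
      refine fun hx => ih ?_
      cases e with
      | fwd a => rw [← σ₁.tgt_eq, ← σ₂.tgt_eq, hq.aMap_eq_of_src h₁ h₂ hx]
      | bwd a => rw [← σ₁.src_eq, ← σ₂.src_eq, hq.aMap_eq_of_tgt h₁ h₂ hx]
  have hV : ∀ w, σ₁.vMap w = σ₂.vMap w := fun w => (hconn v w).elim (propagate · hv)
  exact QuivAut.ext hV fun a => hq.aMap_eq_of_src h₁ h₂ (hV _)

theorem actsFreely_deckGroup (hq : IsCovering q) (hconn : Q.Connected) :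
    ActsFreely (deckGroup q) :=
  fun _ hσ _ hv => hq.eq_of_isDeck hconn hσ (deckGroup q).one_mem hv

end IsCovering

theorem mem_of_isDeck_quotHom {G : Subgroup (QuivAut Q)} (hcov : IsCovering (quotHom Q G))
    (hconn : Q.Connected) {σ : QuivAut Q} (hσ : IsDeck (quotHom Q G) σ) : σ ∈ G := by
  rcases isEmpty_or_nonempty V with _ | ⟨⟨v⟩⟩
  · convert G.one_mem
    ext x
    exacts [isEmptyElim x, isEmptyElim (Q.src x)]
  · obtain ⟨τ, hτ, hτv⟩ := (quot_mk_autRelV_eq_iff G).1 (hσ.1 v).symm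
    rwa [hcov.eq_of_isDeck hconn hσ (isDeck_quotHom hτ) hτv.symm]

end Deck

section Deletion

variable {R : Quiv V} {pairs : Set (R.Arrow × R.Arrow)}

theorem aMap_mem_orbDeleted_iff (σ : QuivAut R)
    (hσ : ∀ q, q ∈ pairs ↔ (σ.aMap q.1, σ.aMap q.2) ∈ pairs) (a : R.Arrow) :
    σ.aMap a ∈ orbDeleted pairs ↔ a ∈ orbDeleted pairs := by
  constructor
  · rintro ⟨q, hq, h⟩
    refine ⟨(σ.aMap.symm q.1, σ.aMap.symm q.2), (hσ _).2 (by simpa using hq), ?_⟩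
    simpa only [Equiv.eq_symm_apply] using h
  · rintro ⟨q, hq, rfl | rfl⟩
    exacts [⟨_, (hσ q).1 hq, Or.inl rfl⟩, ⟨_, (hσ q).1 hq, Or.inr rfl⟩]

def OppositePairsAway (S : Set V) (pairs : Set (R.Arrow × R.Arrow)) : Prop :=
  ∀ q ∈ pairs, R.tgt q.1 = R.src q.2 ∧ R.tgt q.2 = R.src q.1 ∧ R.src q.1 ∉ S ∧ R.tgt q.1 ∉ S

variable {S : Set V}

theorem OppositePairsAway.not_mem_orbDeleted (h : OppositePairsAway S pairs) {x : R.Arrow}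
    (hx : R.src x ∈ S ∨ R.tgt x ∈ S) : x ∉ orbDeleted pairs := by
  rintro ⟨q, hq, rfl | rfl⟩ <;> obtain ⟨e₁, e₂, hs, ht⟩ := h q hq
  · exact hx.elim hs ht
  · rw [← e₁, e₂] at hx
    exact hx.elim ht hs

theorem OppositePairsAway.exists_opposite (h : OppositePairsAway S pairs) {x : R.Arrow}
    (hx : x ∈ orbDeleted pairs) : ∃ y, R.src y = R.tgt x ∧ R.tgt y = R.src x := by
  obtain ⟨q, hq, rfl | rfl⟩ := hx <;> obtain ⟨e₁, e₂, -, -⟩ := h q hq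
  exacts [⟨q.2, e₁.symm, e₂⟩, ⟨q.1, e₂.symm, e₁⟩]

end Deletion

theorem OrbDelValid.oppositePairsAway {Qt : Quiv V} {Qb : Quiv W} {p : QuivHom Qt Qb} {k : W}
    {pairs : Set ((preMutS Qt (p.onV ⁻¹' {k})).Arrow × (preMutS Qt (p.onV ⁻¹' {k})).Arrow)}
    (hpairs : OrbDelValid p k pairs) : OppositePairsAway (p.onV ⁻¹' {k}) pairs :=
  fun q hq =>
    let ⟨e₁, e₂, hs, ht, _⟩ := hpairs.1 q hq
    ⟨e₁, e₂, hs, ht⟩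

section Connected

theorem nonempty_walk_of_arrow {R : Quiv V} (a : R.Arrow) {x y : V} (hx : R.src a = x)
    (hy : R.tgt a = y) : Nonempty (Walk R x y) :=
  ⟨(Walk.single (.fwd a)).cast hx hy⟩

theorem Quiv.Connected.of_nonempty_walk {Q R : Quiv V} (hQ : Q.Connected)
    (h : ∀ a, Nonempty (Walk R (Q.src a) (Q.tgt a))) : R.Connected := by
  intro x y
  obtain ⟨w⟩ := hQ x y
  induction w with
  | nil v => exact ⟨.nil v⟩
  | cons e _ ih =>
    obtain ⟨w₂⟩ := ih
    cases e with
    | fwd a => obtain ⟨w₁⟩ := h a; exact ⟨w₁.comp w₂⟩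
    | bwd a => obtain ⟨w₁⟩ := h a; exact ⟨w₁.inv.comp w₂⟩

variable {Q : Quiv V} {S : Set V} {pairs : Set ((preMutS Q S).Arrow × (preMutS Q S).Arrow)}

theorem nonempty_walk_restrict_preMutS_reversed (h : OppositePairsAway S pairs) (a : Q.Arrow)
    (ha : Q.src a ∈ S ∨ Q.tgt a ∈ S) :
    Nonempty (Walk (restrictQ (preMutS Q S) (orbDeleted pairs)) (Q.tgt a) (Q.src a)) :=
  nonempty_walk_of_arrow (R := restrictQ (preMutS Q S) (orbDeleted pairs))
    ⟨.inr (.inl ⟨a, ha⟩), h.not_mem_orbDeleted ha.symm⟩ rfl rfl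

theorem nonempty_walk_restrict_preMutS (hQ : Q.TwoAcyclic) (h : OppositePairsAway S pairs)
    (a : Q.Arrow) :
    Nonempty (Walk (restrictQ (preMutS Q S) (orbDeleted pairs)) (Q.src a) (Q.tgt a)) := by
  by_cases ha : Q.src a ∈ S ∨ Q.tgt a ∈ S
  · obtain ⟨w⟩ := nonempty_walk_restrict_preMutS_reversed h a ha
    exact ⟨w.inv⟩
  obtain ⟨hs, ht⟩ := not_or.1 ha
  by_cases hx : (.inl ⟨a, hs, ht⟩ : (preMutS Q S).Arrow) ∈ orbDeleted pairs
  swap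
  · exact nonempty_walk_of_arrow (R := restrictQ (preMutS Q S) (orbDeleted pairs))
      ⟨.inl ⟨a, hs, ht⟩, hx⟩ rfl rfl
  -- `a` was deleted together with an opposite arrow, which by `2`-acyclicity of `Q` and since
  -- `a` avoids `S` must be a composite `[αβ]`; then `α*` and `β*` join `s a` to `t a`.
  obtain ⟨δ, hδs, hδt⟩ := h.exists_opposite hx
  rcases δ with ⟨b, _⟩ | ⟨b, hb⟩ | ⟨⟨α, β⟩, hα, hβ⟩
  · exact (hQ a b hδs.symm hδt).elim
  · change Q.tgt b = Q.tgt a at hδs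
    change Q.src b = Q.src a at hδt
    rw [hδs, hδt] at hb
    exact (ha hb).elim
  · change Q.src β = Q.tgt a at hδs
    change Q.tgt α = Q.src a at hδt
    obtain ⟨w₁⟩ := nonempty_walk_restrict_preMutS_reversed h α (.inl hα)
    obtain ⟨w₂⟩ := nonempty_walk_restrict_preMutS_reversed h β (.inr (hβ ▸ hα))
    exact ⟨(w₁.comp (w₂.cast hβ rfl)).cast hδt hδs⟩

end Connected

section OrbitMutation

variable {Qt : Quiv V} {Qb : Quiv W} (p : QuivHom Qt Qb) (k : W)
  (pairs : Set ((preMutS Qt (p.onV ⁻¹' {k})).Arrow × (preMutS Qt (p.onV ⁻¹' {k})).Arrow))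
  (hpairs : OrbDelValid p k pairs)

def mutAut (τ : QuivAut Qt) (hτ : IsDeck p τ) :
    QuivAut (restrictQ (preMutS Qt (p.onV ⁻¹' {k})) (orbDeleted pairs)) :=
  (deckAct p k τ hτ).restrict _ (aMap_mem_orbDeleted_iff _ (hpairs.2.2.2 τ hτ))

def mutAutHom :
    deckGroup p →* QuivAut (restrictQ (preMutS Qt (p.onV ⁻¹' {k})) (orbDeleted pairs)) where
  toFun τ := mutAut p k pairs hpairs τ τ.2
  map_one' := by
    ext x
    · rfl
    · obtain ⟨_ | _ | _, _⟩ := x <;> rfl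
  map_mul' _ _ := by
    ext x
    · rfl
    · obtain ⟨_ | _ | _, _⟩ := x <;> rfl

theorem mutAut_one (h : IsDeck p 1) : mutAut p k pairs hpairs 1 h = 1 :=
  (mutAutHom p k pairs hpairs).map_one

theorem coe_range_mutAutHom :
    ((mutAutHom p k pairs hpairs).range : Set (QuivAut _)) =
      {σ | ∃ (τ : QuivAut Qt) (hτ : IsDeck p τ), σ = mutAut p k pairs hpairs τ hτ} := by
  ext σ
  constructor
  · rintro ⟨⟨τ, hτ⟩, rfl⟩
    exact ⟨τ, hτ, rfl⟩
  · rintro ⟨τ, hτ, rfl⟩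
    exact ⟨⟨τ, hτ⟩, rfl⟩

theorem actsFreely_range_mutAutHom (hfree : ActsFreely (deckGroup p)) :
    ActsFreely (mutAutHom p k pairs hpairs).range := by
  rintro _ ⟨τ, rfl⟩ v hv
  obtain rfl : τ = 1 := Subtype.ext (hfree τ τ.2 v hv)
  exact map_one _

end OrbitMutation

theorem orbit_mutation_quotient_covering_general {V W : Type} {Qt : Quiv V} {Qb : Quiv W}
    (p : QuivHom Qt Qb) (k : W)
    (hwa : WeaklyAdmissible p) (hconn : Qt.Connected)
    (pairs : Set ((preMutS Qt (p.onV ⁻¹' {k})).Arrow × (preMutS Qt (p.onV ⁻¹' {k})).Arrow))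
    (hpairs : OrbDelValid p k pairs) :
    ∃ ext : ∀ (τ : QuivAut Qt), IsDeck p τ →
        QuivAut (restrictQ (preMutS Qt (p.onV ⁻¹' {k})) (orbDeleted pairs)),
      -- `ext τ` is the restriction of the extended action of `τ`
      (∀ (τ : QuivAut Qt) (hτ : IsDeck p τ),
        (∀ v, (ext τ hτ).vMap v = τ.vMap v) ∧
        ∀ a, ((ext τ hτ).aMap a).1 = (deckAct p k τ hτ).aMap a.1) ∧
      -- the action is free
      (∀ (τ : QuivAut Qt) (hτ : IsDeck p τ),
        ((∃ v, (ext τ hτ).vMap v = v) ∨ ∃ a, (ext τ hτ).aMap a = a) →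
        (∀ v, τ.vMap v = v) ∧ (∀ a, τ.aMap a = a) ∧ ∀ a, (ext τ hτ).aMap a = a) ∧
      -- the quotient morphism is a covering with deck transformation group `G = Γ`
      (IsCovering (quotHom (restrictQ (preMutS Qt (p.onV ⁻¹' {k})) (orbDeleted pairs))
          {σ | ∃ (τ : QuivAut Qt) (hτ : IsDeck p τ), σ = ext τ hτ}) ∧
        (∀ (τ : QuivAut Qt) (hτ : IsDeck p τ),
          IsDeck (quotHom (restrictQ (preMutS Qt (p.onV ⁻¹' {k})) (orbDeleted pairs))
            {σ | ∃ (τ' : QuivAut Qt) (hτ' : IsDeck p τ'), σ = ext τ' hτ'}) (ext τ hτ)) ∧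
        ∀ σ, IsDeck (quotHom (restrictQ (preMutS Qt (p.onV ⁻¹' {k})) (orbDeleted pairs))
            {σ' | ∃ (τ : QuivAut Qt) (hτ : IsDeck p τ), σ' = ext τ hτ}) σ →
          ∃ (τ : QuivAut Qt) (hτ : IsDeck p τ), σ = ext τ hτ) := by
  have hfree := hwa.1.actsFreely_deckGroup hconn
  have hmut : (restrictQ (preMutS Qt (p.onV ⁻¹' {k})) (orbDeleted pairs)).Connected :=
    hconn.of_nonempty_walk (nonempty_walk_restrict_preMutS hwa.2.2.1 hpairs.oppositePairsAway)
  refine ⟨mutAut p k pairs hpairs, fun _ _ => ⟨fun _ => rfl, fun _ => rfl⟩, ?_, ?_⟩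
  · intro τ hτ hfix
    obtain ⟨v, hv⟩ : ∃ v, τ.vMap v = v := by
      rcases hfix with ⟨v, hv⟩ | ⟨a, ha⟩
      exacts [⟨v, hv⟩, ⟨_, ((mutAut p k pairs hpairs τ hτ).src_eq a).symm.trans (congrArg _ ha)⟩]
    obtain rfl : τ = 1 := hfree τ hτ v hv
    exact ⟨fun _ => rfl, fun _ => rfl, fun a => by rw [mutAut_one]; rfl⟩
  rw [← coe_range_mutAutHom]
  have hcov := isCovering_quotHom (actsFreely_range_mutAutHom p k pairs hpairs hfree)
  refine ⟨hcov, fun τ hτ => isDeck_quotHom ⟨⟨τ, hτ⟩, rfl⟩, fun σ hσ => ?_⟩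
  obtain ⟨⟨τ, hτ⟩, rfl⟩ := mem_of_isDeck_quotHom hcov hmut hσ
  exact ⟨τ, hτ, rfl⟩

/-- **The deck group acts freely on the orbit mutation, and the quotient map is a covering
with deck transformation group `Γ`** (Proposition `prop: mutation of a covering`).
Let `p : Q̃ → Q` be a weakly admissible covering of connected quivers, `k` a vertex of `Q`,
`Γ = Deck(p)`, and let `pairs` be a `Γ`-equivariant maximal collection of `2`-cycles of the
orbit pre-mutation to delete.  Then every deck transformation restricts to an automorphism of
the orbit mutation `μ_[k](Q̃)`, this action of `Γ` is free, and — with `G` the set of these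
restricted automorphisms — the quotient morphism `μ_[k](Q̃) → μ_[k](Q̃)/Γ` is a covering of
quivers whose deck transformations are exactly the elements of `G ≅ Γ`. -/
theorem orbit_mutation_quotient_covering {V W : Type} {Qt : Quiv V} {Qb : Quiv W}
    (p : QuivHom Qt Qb) (k : W)
    (hwa : WeaklyAdmissible p) (hconn : Qt.Connected) (hlf : Qt.LocallyFinite)
    (pairs : Set ((preMutS Qt (p.onV ⁻¹' {k})).Arrow × (preMutS Qt (p.onV ⁻¹' {k})).Arrow))
    (hpairs : OrbDelValid p k pairs) :
    ∃ ext : ∀ (τ : QuivAut Qt), IsDeck p τ →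
        QuivAut (restrictQ (preMutS Qt (p.onV ⁻¹' {k})) (orbDeleted pairs)),
      -- `ext τ` is the restriction of the extended action of `τ`
      (∀ (τ : QuivAut Qt) (hτ : IsDeck p τ),
        (∀ v, (ext τ hτ).vMap v = τ.vMap v) ∧
        ∀ a, ((ext τ hτ).aMap a).1 = (deckAct p k τ hτ).aMap a.1) ∧
      -- the action is free
      (∀ (τ : QuivAut Qt) (hτ : IsDeck p τ),
        ((∃ v, (ext τ hτ).vMap v = v) ∨ ∃ a, (ext τ hτ).aMap a = a) →
        (∀ v, τ.vMap v = v) ∧ (∀ a, τ.aMap a = a) ∧ ∀ a, (ext τ hτ).aMap a = a) ∧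
      -- the quotient morphism is a covering with deck transformation group `G = Γ`
      (IsCovering (quotHom (restrictQ (preMutS Qt (p.onV ⁻¹' {k})) (orbDeleted pairs))
          {σ | ∃ (τ : QuivAut Qt) (hτ : IsDeck p τ), σ = ext τ hτ}) ∧
        (∀ (τ : QuivAut Qt) (hτ : IsDeck p τ),
          IsDeck (quotHom (restrictQ (preMutS Qt (p.onV ⁻¹' {k})) (orbDeleted pairs))
            {σ | ∃ (τ' : QuivAut Qt) (hτ' : IsDeck p τ'), σ = ext τ' hτ'}) (ext τ hτ)) ∧
        ∀ σ, IsDeck (quotHom (restrictQ (preMutS Qt (p.onV ⁻¹' {k})) (orbDeleted pairs))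
            {σ' | ∃ (τ : QuivAut Qt) (hτ : IsDeck p τ), σ' = ext τ hτ}) σ →
          ∃ (τ : QuivAut Qt) (hτ : IsDeck p τ), σ = ext τ hτ) :=
  orbit_mutation_quotient_covering_general p k hwa hconn pairs hpairs

end CMu
end
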